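/- Let f : [−1,1] → [−1,1] be the quadratic map f(x) = 1 − a x² for a parameter 0 < a ≤ 2, let λ > 0, define h(x) = min{n > 0 : |(f^n)'(x)| ≥ e^{λn}} and Γ_n = {x ∈ [−1,1] : h(x) ≥ n}, and suppose there exist constants C, c > 0 such that Leb(Γ_n) ≤ C·e^{−cn} for every n ≥ 1. Then there exists β > 0 such that for Lebesgue almost every x ∈ [−1,1] there is C_x > 0 with |(f^n)'(y)| > C_x · e^{βn} for every n ≥ 1 and every y ∈ f^{−n}(x). -/

import Mathlib

open MeasureTheory Set Function Real

/-- `h(x) = min {n > 0 : |(f^n)'(x)| ≥ e^{λ n}}` for an interval map `f`, with value `∞`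
if no such `n` exists. -/
noncomputable def firstExpTime1D (f : ℝ → ℝ) (lam : ℝ) (x : ℝ) : ℕ∞ :=
  sInf {N : ℕ∞ | ∃ m : ℕ, (m : ℕ∞) = N ∧ 0 < m ∧
    Real.exp (lam * m) ≤ |deriv (f^[m]) x|}

/-!
Cut the orbit of a preimage `y` of `x` greedily at successive first expansion times. Each
completed block multiplies the derivative by at least `e^{λ·length}`, and the unfinished last
block, of length `k`, starts at a point `z` with `h(z) > k`. Hence if `|(f^n)'(y)| ≤ e^{βn}`, then
`x = f^k(z)` with `z ∈ Γ_{k+1}` and `|(f^k)'(z)| ≤ e^{βn - λ(n-k)}`, unless the orbit meets the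
null set `{h = ∞}`. Such images have measure `≤ C e^{βn - λ(n-k) - c(k+1)}`, so for
`β = min(λ, c)/2` the measures of the sets of `x` having a slow `n`-th preimage are summable and
Borel–Cantelli bounds all large `n`. For the finitely many other `n`, the fibre of `f^n` over `x`
is compact, and `(f^n)'` has no zero on it as long as `x` avoids the critical values of the
iterates, a null set by Sard's lemma.
-/

open Filter
open scoped ENNReal

theorem ContDiff.iterate {𝕜 E : Type*} [NontriviallyNormedField 𝕜] [NormedAddCommGroup E]
    [NormedSpace 𝕜 E] {n : WithTop ℕ∞} {f : E → E} (hf : ContDiff 𝕜 n f) (k : ℕ) :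
    ContDiff 𝕜 n f^[k] := by
  induction k with
  | zero => exact contDiff_id
  | succ k ih => rw [iterate_succ']; exact hf.comp ih

theorem deriv_iterate_add {𝕜 : Type*} [NontriviallyNormedField 𝕜] {f : 𝕜 → 𝕜}
    (hf : Differentiable 𝕜 f) (p q : ℕ) (x : 𝕜) :
    deriv f^[q + p] x = deriv f^[q] (f^[p] x) * deriv f^[p] x := by
  rw [iterate_add]
  exact deriv_comp x (hf.iterate q _) (hf.iterate p x)

theorem volume_image_le_of_abs_deriv_le {f f' : ℝ → ℝ} {s : Set ℝ} {M : ℝ}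
    (hs : MeasurableSet s) (hf' : ∀ x ∈ s, HasDerivWithinAt f (f' x) s x)
    (hM : ∀ x ∈ s, |f' x| ≤ M) :
    volume (f '' s) ≤ ENNReal.ofReal M * volume s :=
  calc volume (f '' s)
      ≤ ∫⁻ x in s, ENNReal.ofReal |f' x| := by
        simpa only [ContinuousLinearMap.det_toSpanSingleton] using
          addHaar_image_le_lintegral_abs_det_fderiv volume hs
            fun x hx => (hf' x hx).hasFDerivWithinAt
    _ ≤ ∫⁻ _ in s, ENNReal.ofReal M :=
        setLIntegral_mono' hs fun x hx => ENNReal.ofReal_le_ofReal (hM x hx)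
    _ = ENNReal.ofReal M * volume s := setLIntegral_const s _

theorem volume_image_eq_zero_of_deriv_eq_zero {f f' : ℝ → ℝ} {s : Set ℝ}
    (hf' : ∀ x ∈ s, HasDerivWithinAt f (f' x) s x) (h : ∀ x ∈ s, f' x = 0) :
    volume (f '' s) = 0 :=
  addHaar_image_eq_zero_of_det_fderivWithin_eq_zero volume
    (fun x hx => (hf' x hx).hasFDerivWithinAt) fun x hx => by
      rw [ContinuousLinearMap.det_toSpanSingleton, h x hx]

theorem exists_pos_forall_of_eventually {P : ℕ → ℝ → Prop} (hP : ∀ n, Antitone (P n))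
    (hpos : ∀ n, ∃ c, 0 < c ∧ P n c) (hev : ∀ᶠ n in atTop, P n 1) :
    ∃ c, 0 < c ∧ ∀ n, P n c := by
  choose c hc0 hcP using hpos
  have hinit : ∀ N, ∃ d, 0 < d ∧ d ≤ 1 ∧ ∀ n < N, P n d := by
    intro N
    induction N with
    | zero => exact ⟨1, one_pos, le_rfl, by simp⟩
    | succ N ih =>
      obtain ⟨d, hd, hd1, hdP⟩ := ih
      refine ⟨min d (c N), lt_min hd (hc0 N), (min_le_left _ _).trans hd1, fun n hn => ?_⟩
      rcases Nat.lt_succ_iff_lt_or_eq.1 hn with hn | rfl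
      · exact hP n (min_le_left _ _) (hdP n hn)
      · exact hP n (min_le_right _ _) (hcP n)
  obtain ⟨N, hN⟩ := eventually_atTop.1 hev
  obtain ⟨d, hd, hd1, hdP⟩ := hinit N
  refine ⟨d, hd, fun n => ?_⟩
  rcases lt_or_ge n N with hn | hn
  · exact hdP n hn
  · exact hP n hd1 (hN n hn)

section ExpansionTime

variable {f : ℝ → ℝ} {lam : ℝ}

theorem natCast_le_firstExpTime1D_iff {n : ℕ} {x : ℝ} :
    (n : ℕ∞) ≤ firstExpTime1D f lam x ↔
      ∀ m : ℕ, 0 < m → exp (lam * m) ≤ |deriv f^[m] x| → n ≤ m := by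
  simp only [firstExpTime1D, le_sInf_iff, mem_ofPred_eq]
  constructor
  · intro h m hm hexp
    exact_mod_cast h m ⟨m, rfl, hm, hexp⟩
  · rintro h _ ⟨m, rfl, hm, hexp⟩
    exact_mod_cast h m hm hexp

theorem exists_eq_firstExpTime1D {x : ℝ} (h : firstExpTime1D f lam x ≠ ⊤) :
    ∃ m : ℕ, firstExpTime1D f lam x = m ∧ 0 < m ∧ exp (lam * m) ≤ |deriv f^[m] x| := by
  have hne : Set.Nonempty
      {N : ℕ∞ | ∃ m : ℕ, (m : ℕ∞) = N ∧ 0 < m ∧ exp (lam * m) ≤ |deriv f^[m] x|} :=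
    nonempty_iff_ne_empty.2 fun hempty => h (by rw [firstExpTime1D, hempty]; exact sInf_empty)
  obtain ⟨m, hm, hpos, hexp⟩ := csInf_mem hne
  exact ⟨m, hm.symm, hpos, hexp⟩

theorem measurableSet_natCast_le_firstExpTime1D (n : ℕ) :
    MeasurableSet {x | (n : ℕ∞) ≤ firstExpTime1D f lam x} := by
  simp only [natCast_le_firstExpTime1D_iff, ofPred_forall]
  refine MeasurableSet.iInter fun m => MeasurableSet.iInter fun _ => ?_
  exact measurableSet_setOfPred.2 <| Measurable.imp
    (measurableSet_setOfPred.1 (measurableSet_le measurable_const (measurable_deriv _).abs))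
    measurable_const

theorem exists_expanding_prefix (hf : Differentiable ℝ f) (n : ℕ) (y : ℝ)
    (hfin : ∀ j ≤ n, firstExpTime1D f lam (f^[j] y) ≠ ⊤) :
    ∃ j k : ℕ, j + k = n ∧ exp (lam * j) ≤ |deriv f^[j] y| ∧
      ((k + 1 : ℕ) : ℕ∞) ≤ firstExpTime1D f lam (f^[j] y) := by
  induction n using Nat.strong_induction_on generalizing y with
  | _ n ih =>
    obtain ⟨m, hm, hm0, hexp⟩ := exists_eq_firstExpTime1D (hfin 0 (Nat.zero_le n))
    rw [iterate_zero_apply] at hm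
    rcases lt_or_ge n m with hnm | hmn
    · refine ⟨0, n, zero_add n, by simp, ?_⟩
      rw [iterate_zero_apply, hm]
      exact_mod_cast hnm
    · obtain ⟨j, k, hjk, hj, hk⟩ := ih (n - m) (by omega) (f^[m] y) fun i hi => by
        rw [← iterate_add_apply]; exact hfin (i + m) (by omega)
      refine ⟨j + m, k, by omega, ?_, by rwa [iterate_add_apply]⟩
      rw [deriv_iterate_add hf, abs_mul, Nat.cast_add, mul_add, exp_add]
      exact mul_le_mul hj hexp (exp_pos _).le (abs_nonneg _)

end ExpansionTime

/-- The paper's `Γ_n`, relative to the phase space `s`. -/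
def expTimeTail (f : ℝ → ℝ) (lam : ℝ) (s : Set ℝ) (n : ℕ) : Set ℝ :=
  {x ∈ s | (n : ℕ∞) ≤ firstExpTime1D f lam x}

def slowPreimageSet (f : ℝ → ℝ) (s : Set ℝ) (β : ℝ) (n : ℕ) : Set ℝ :=
  {x | ∃ y ∈ s, f^[n] y = x ∧ |deriv f^[n] y| ≤ exp (β * n)}

section Contraction

variable {f : ℝ → ℝ} {s : Set ℝ} {lam c β : ℝ} {C : ℝ≥0∞}

theorem slowPreimageSet_subset (hf : Differentiable ℝ f) (hfs : MapsTo f s s) (n : ℕ) :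
    slowPreimageSet f s β n ⊆ (⋃ k, f^[k] '' {x ∈ s | firstExpTime1D f lam x = ⊤}) ∪
      ⋃ k ∈ Finset.range (n + 1), f^[k] ''
        {z ∈ expTimeTail f lam s (k + 1) | |deriv f^[k] z| ≤ exp ((β - lam) * n + lam * k)} := by
  rintro x ⟨y, hy, rfl, hslow⟩
  by_cases hfin : ∀ j ≤ n, firstExpTime1D f lam (f^[j] y) ≠ ⊤
  · obtain ⟨j, k, rfl, hj, hk⟩ := exists_expanding_prefix hf n y hfin
    refine Or.inr <| mem_biUnion (Finset.mem_range.2 (by omega))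
      ⟨f^[j] y, ⟨⟨hfs.iterate j hy, hk⟩, ?_⟩, by rw [← iterate_add_apply, add_comm]⟩
    have hsplit : exp (lam * j) * |deriv f^[k] (f^[j] y)| ≤ exp (β * ↑(j + k)) := by
      calc exp (lam * j) * |deriv f^[k] (f^[j] y)|
          ≤ |deriv f^[j] y| * |deriv f^[k] (f^[j] y)| := by gcongr
        _ = |deriv f^[j + k] y| := by rw [add_comm, deriv_iterate_add hf, abs_mul, mul_comm]
        _ ≤ exp (β * ↑(j + k)) := hslow
    rw [← le_div_iff₀' (exp_pos _), ← exp_sub] at hsplit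
    refine hsplit.trans_eq (congrArg exp ?_)
    push_cast
    ring
  · push Not at hfin
    obtain ⟨j, hjn, hj⟩ := hfin
    refine Or.inl <| mem_iUnion.2 ⟨n - j, f^[j] y, ⟨hfs.iterate j hy, hj⟩, ?_⟩
    rw [← iterate_add_apply, Nat.sub_add_cancel hjn]

theorem volume_firstExpTime1D_eq_top (hc : 0 < c) (hC : C ≠ ⊤)
    (hΓ : ∀ n : ℕ, 1 ≤ n → volume (expTimeTail f lam s n) ≤ C * ENNReal.ofReal (exp (-c * n))) :
    volume {x ∈ s | firstExpTime1D f lam x = ⊤} = 0 := by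
  have hlim : Tendsto (fun n : ℕ => C * ENNReal.ofReal (exp (-c * n))) atTop (nhds 0) := by
    have hexp : Tendsto (fun n : ℕ => exp (-c * n)) atTop (nhds 0) :=
      tendsto_exp_atBot.comp <| tendsto_natCast_atTop_atTop.const_mul_atTop_of_neg (by linarith)
    simpa using ENNReal.Tendsto.const_mul (ENNReal.tendsto_ofReal hexp) (Or.inr hC)
  refine le_antisymm (ge_of_tendsto hlim ?_) zero_le
  filter_upwards [eventually_ge_atTop 1] with n hn
  have hsub : {x ∈ s | firstExpTime1D f lam x = ⊤} ⊆ expTimeTail f lam s n :=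
    fun x hx => ⟨hx.1, hx.2 ▸ le_top⟩
  exact (measure_mono hsub).trans (hΓ n hn)


theorem volume_image_expTimeTail_le (hf : Differentiable ℝ f) (hs : MeasurableSet s) (k : ℕ)
    (M : ℝ) :
    volume (f^[k] '' {z ∈ expTimeTail f lam s (k + 1) | |deriv f^[k] z| ≤ M}) ≤
      ENNReal.ofReal M * volume (expTimeTail f lam s (k + 1)) := by
  have hmeas : MeasurableSet {z ∈ expTimeTail f lam s (k + 1) | |deriv f^[k] z| ≤ M} :=
    (hs.inter (measurableSet_natCast_le_firstExpTime1D _)).inter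
      (measurableSet_le (f := fun z => |deriv f^[k] z|) (measurable_deriv _).abs measurable_const)
  refine (volume_image_le_of_abs_deriv_le hmeas
    (fun z _ => ((hf.iterate k) z).hasDerivAt.hasDerivWithinAt) fun z hz => hz.2).trans ?_
  gcongr
  exact fun z hz => hz.1

theorem volume_slowPreimageSet_le (hf : Differentiable ℝ f) (hs : MeasurableSet s)
    (hfs : MapsTo f s s) (hc : 0 < c) (hC : C ≠ ⊤)
    (hΓ : ∀ n : ℕ, 1 ≤ n → volume (expTimeTail f lam s n) ≤ C * ENNReal.ofReal (exp (-c * n)))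
    (n : ℕ) :
    volume (slowPreimageSet f s β n) ≤
      C * ENNReal.ofReal ((n + 1) * exp ((β - min lam c) * n)) := by
  have hpiece : ∀ k ∈ Finset.range (n + 1), volume (f^[k] ''
      {z ∈ expTimeTail f lam s (k + 1) | |deriv f^[k] z| ≤ exp ((β - lam) * n + lam * k)}) ≤
      C * ENNReal.ofReal (exp ((β - min lam c) * n)) := by
    intro k hk
    have hkn : (k : ℝ) ≤ n := by exact_mod_cast Finset.mem_range_succ_iff.1 hk
    have hexponent : (β - lam) * n + lam * k + -c * ↑(k + 1) ≤ (β - min lam c) * n := by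
      push_cast
      nlinarith [min_le_left lam c, min_le_right lam c, (Nat.cast_nonneg k : (0 : ℝ) ≤ k)]
    calc _ ≤ ENNReal.ofReal (exp ((β - lam) * n + lam * k)) *
          (C * ENNReal.ofReal (exp (-c * ↑(k + 1)))) :=
          (volume_image_expTimeTail_le hf hs k _).trans (by gcongr; exact hΓ (k + 1) (by omega))
      _ = C * ENNReal.ofReal (exp ((β - lam) * n + lam * k + -c * ↑(k + 1))) := by
          rw [mul_left_comm, ← ENNReal.ofReal_mul (exp_pos _).le, ← exp_add]
      _ ≤ C * ENNReal.ofReal (exp ((β - min lam c) * n)) := by gcongr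
  calc volume (slowPreimageSet f s β n)
      ≤ volume (⋃ k, f^[k] '' {x ∈ s | firstExpTime1D f lam x = ⊤}) + ∑ k ∈ Finset.range (n + 1),
          volume (f^[k] '' {z ∈ expTimeTail f lam s (k + 1) |
            |deriv f^[k] z| ≤ exp ((β - lam) * n + lam * k)}) :=
        (measure_mono (slowPreimageSet_subset hf hfs n)).trans <|
          (measure_union_le _ _).trans (add_le_add le_rfl (measure_biUnion_finset_le _ _))
    _ ≤ 0 + ∑ _k ∈ Finset.range (n + 1), C * ENNReal.ofReal (exp ((β - min lam c) * n)) := by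
        gcongr with k hk
        · refine (measure_iUnion_null fun k => ?_).le
          exact addHaar_image_eq_zero_of_differentiableOn_of_addHaar_eq_zero volume
            (hf.iterate k).differentiableOn (volume_firstExpTime1D_eq_top hc hC hΓ)
        · exact hpiece k hk
    _ = C * ENNReal.ofReal ((n + 1) * exp ((β - min lam c) * n)) := by
        rw [zero_add, Finset.sum_const, Finset.card_range, nsmul_eq_mul, mul_left_comm,
          ENNReal.ofReal_mul (by positivity)]
        norm_cast

theorem tsum_ofReal_succ_mul_exp_ne_top (hC : C ≠ ⊤) (hβ : 0 < β) :
    ∑' n : ℕ, C * ENNReal.ofReal ((n + 1) * exp (-β * n)) ≠ ⊤ := by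
  have hsum : Summable fun n : ℕ => (n + 1) * exp (-β * n) :=
    ((summable_pow_mul_exp_neg_nat_mul 1 hβ).add (summable_pow_mul_exp_neg_nat_mul 0 hβ)).congr
      fun n => by ring
  rw [ENNReal.tsum_mul_left, ← ENNReal.ofReal_tsum_of_nonneg (fun n => by positivity) hsum]
  exact ENNReal.mul_ne_top hC ENNReal.ofReal_ne_top

theorem ae_exists_pos_forall_lt_abs_deriv_iterate (hf : ContDiff ℝ 1 f) (hs : IsCompact s)
    (hfs : MapsTo f s s) (hlam : 0 < lam) (hc : 0 < c) (hC : C ≠ ⊤)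
    (hΓ : ∀ n : ℕ, 1 ≤ n → volume (expTimeTail f lam s n) ≤ C * ENNReal.ofReal (exp (-c * n))) :
    ∃ β : ℝ, 0 < β ∧ ∀ᵐ x, ∃ Cx : ℝ, 0 < Cx ∧ ∀ n : ℕ, ∀ y ∈ s, f^[n] y = x →
      Cx * exp (β * n) < |deriv f^[n] y| := by
  have hdiff : Differentiable ℝ f := hf.differentiable one_ne_zero
  set β := min lam c / 2
  have hβ : 0 < β := by positivity
  have hslow : ∑' n, volume (slowPreimageSet f s β n) ≠ ⊤ := by
    refine ne_top_of_le_ne_top (tsum_ofReal_succ_mul_exp_ne_top hC hβ) (ENNReal.tsum_le_tsum ?_)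
    intro n
    convert volume_slowPreimageSet_le hdiff hs.measurableSet hfs hc hC hΓ n using 5
    ring
  have hcrit : volume (⋃ n, f^[n] '' {y | deriv f^[n] y = 0}) = 0 :=
    measure_iUnion_null fun n => volume_image_eq_zero_of_deriv_eq_zero
      (fun y _ => ((hdiff.iterate n) y).hasDerivAt.hasDerivWithinAt) fun _ hy => hy
  refine ⟨β, hβ, ?_⟩
  filter_upwards [ae_eventually_notMem hslow, measure_eq_zero_iff_ae_notMem.1 hcrit]
    with x hx_slow hx_crit
  have hfiber_pos : ∀ n : ℕ, ∃ m, 0 < m ∧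
      ∀ y ∈ s, f^[n] y = x → m * exp (β * n) ≤ |deriv f^[n] y| := by
    intro n
    have hfiber : IsCompact (s ∩ f^[n] ⁻¹' {x}) :=
      hs.inter_right (isClosed_singleton.preimage (hf.continuous.iterate n))
    obtain ⟨m, hm, hmle⟩ := hfiber.exists_forall_le'
      ((hf.iterate n).continuous_deriv le_rfl).abs.continuousOn (a := 0) fun y hy =>
        abs_pos.2 fun h0 => hx_crit (mem_iUnion.2 ⟨n, y, h0, hy.2⟩)
    refine ⟨m / exp (β * n), by positivity, fun y hy hyx => ?_⟩
    rw [div_mul_cancel₀ _ (exp_pos _).ne']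
    exact hmle y ⟨hy, hyx⟩
  have hfiber_eventually : ∀ᶠ n : ℕ in atTop,
      ∀ y ∈ s, f^[n] y = x → 1 * exp (β * n) ≤ |deriv f^[n] y| := by
    filter_upwards [hx_slow] with n hn y hy hyx
    rw [one_mul]
    exact (lt_of_not_ge fun hle => hn ⟨y, hy, hyx, hle⟩).le
  obtain ⟨Cx, hCx, hbound⟩ := exists_pos_forall_of_eventually
    (by intro n _ _ hle h y hy hyx; exact (by gcongr : _ ≤ _).trans (h y hy hyx))
    hfiber_pos hfiber_eventually
  exact ⟨Cx / 2, half_pos hCx, fun n y hy hyx =>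
    lt_of_lt_of_le (by gcongr; linarith) (hbound n y hy hyx)⟩

end Contraction

theorem quadratic_backward_contraction_general (a : ℝ) (ha0 : 0 < a) (ha2 : a ≤ 2)
    (f : ℝ → ℝ) (hfdef : ∀ x, f x = 1 - a * x ^ 2)
    (lam : ℝ) (hlam : 0 < lam)
    (C c : ℝ) (hc : 0 < c)
    (hGamma : ∀ n : ℕ, 1 ≤ n →
      volume {x ∈ Icc (-1 : ℝ) 1 | (n : ℕ∞) ≤ firstExpTime1D f lam x} ≤
        ENNReal.ofReal (C * Real.exp (-c * n))) :
    ∃ β : ℝ, 0 < β ∧ ∀ᵐ x ∂(volume.restrict (Icc (-1 : ℝ) 1)),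
      ∃ Cx : ℝ, 0 < Cx ∧ ∀ n : ℕ, 1 ≤ n → ∀ y ∈ Icc (-1 : ℝ) 1, f^[n] y = x →
        Cx * Real.exp (β * n) < |deriv (f^[n]) y| := by
  have hf : ContDiff ℝ 1 f := by
    rw [show f = fun x => 1 - a * x ^ 2 from funext hfdef]
    fun_prop
  have hmaps : MapsTo f (Icc (-1) 1) (Icc (-1) 1) := fun x ⟨hx1, hx2⟩ => by
    rw [hfdef]
    constructor <;> nlinarith
  obtain ⟨β, hβ, hae⟩ := ae_exists_pos_forall_lt_abs_deriv_iterate hf isCompact_Icc hmaps hlam hc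
    ENNReal.ofReal_ne_top fun n hn => (hGamma n hn).trans_eq (ENNReal.ofReal_mul' (exp_pos _).le)
  exact ⟨β, hβ, ae_restrict_of_ae (hae.mono fun x ⟨Cx, hCx, hx⟩ => ⟨Cx, hCx, fun n _ => hx n⟩)⟩

/-- Backward contraction for quadratic maps `f(x) = 1 - a x²` on `[-1,1]`: if
`Leb (Γ_n) ≤ C e^{-c n}` for the tail sets of `h(x) = min {n > 0 : |(f^n)'(x)| ≥ e^{λn}}`,
then there is `β > 0` such that for Lebesgue a.e. `x ∈ [-1,1]` there is `C_x > 0` with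
`|(f^n)'(y)| > C_x e^{β n}` for every `n ≥ 1` and every `y ∈ f^{-n}(x)`. -/
theorem quadratic_backward_contraction (a : ℝ) (ha0 : 0 < a) (ha2 : a ≤ 2)
    (f : ℝ → ℝ) (hfdef : ∀ x, f x = 1 - a * x ^ 2)
    (lam : ℝ) (hlam : 0 < lam)
    (C c : ℝ) (hC : 0 < C) (hc : 0 < c)
    (hGamma : ∀ n : ℕ, 1 ≤ n →
      volume {x ∈ Icc (-1 : ℝ) 1 | (n : ℕ∞) ≤ firstExpTime1D f lam x} ≤
        ENNReal.ofReal (C * Real.exp (-c * n))) :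
    ∃ β : ℝ, 0 < β ∧ ∀ᵐ x ∂(volume.restrict (Icc (-1 : ℝ) 1)),
      ∃ Cx : ℝ, 0 < Cx ∧ ∀ n : ℕ, 1 ≤ n → ∀ y ∈ Icc (-1 : ℝ) 1, f^[n] y = x →
        Cx * Real.exp (β * n) < |deriv (f^[n]) y| :=
  quadratic_backward_contraction_general a ha0 ha2 f hfdef lam hlam C c hc hGamma
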